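/- Let β : ℝ^d → Mat_d(ℝ) be differentiable with entries β^{ij}, and let R^{ijk} : ℝ^d → ℝ be totally antisymmetric. Consider the anchor with components ρ^i{}_J = (δ^i{}_j, β^{ij}) and the twist T_{IJK} whose only possibly nonvanishing components are the all-upper ones T^{ijk} = R^{ijk} (i.e. H = f = Q = 0). If conditions (ca1): η^{IJ} ρ^i{}_I ρ^j{}_J = 0 and (ca2): ρ^i{}_I ∂_i ρ^j{}_J − ρ^i{}_J ∂_i ρ^j{}_I = η^{KL} ρ^j{}_K T_{LIJ} hold for all indices, then β is antisymmetric, all partial derivatives ∂_k β^{ij} vanish, and R^{ijk} = 0 identically. In particular, there is no Courant algebroid over ℝ^d with anchor (id, β) carrying a pure nonzero R-flux. -/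

import Mathlib

open scoped BigOperators

noncomputable section

/-- Doubled index set: `I = 1,…,2d` realized as `Fin d ⊕ Fin d`;
`Sum.inl i` is the lower (vector) label `i`, `Sum.inr i` the upper (form) label `^i`. -/
abbrev DIdx (d : ℕ) := Fin d ⊕ Fin d

/-- The base space `ℝ^d`. -/
abbrev BSpace (d : ℕ) := Fin d → ℝ

/-- The constant split-signature metric `η = ((0,1_d),(1_d,0))`. -/
def eta {d : ℕ} : DIdx d → DIdx d → ℝ
  | Sum.inl i, Sum.inr j => if i = j then 1 else 0
  | Sum.inr i, Sum.inl j => if i = j then 1 else 0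
  | _, _ => 0

/-- Partial derivative `∂_i f (x)` on the base `ℝ^d`. -/
def pdb {d : ℕ} (f : BSpace d → ℝ) (i : Fin d) (x : BSpace d) : ℝ :=
  fderiv ℝ f x (Pi.single i 1)

/-- Weight-one antisymmetrization over three indices. -/
def asym3 {α : Type*} (G : α → α → α → ℝ) (a b c : α) : ℝ :=
  (1/6) * (G a b c - G a c b + G b c a - G b a c + G c a b - G c b a)

/-- Weight-one antisymmetrization over four indices. -/
def asym4 {α : Type*} (G : α → α → α → α → ℝ) (a b c e : α) : ℝ :=
  (1/24) * ∑ σ : Equiv.Perm (Fin 4),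
    ((Equiv.Perm.sign σ : ℤ) : ℝ) *
      G (![a,b,c,e] (σ 0)) (![a,b,c,e] (σ 1)) (![a,b,c,e] (σ 2)) (![a,b,c,e] (σ 3))

/-- Local Courant algebroid condition (ca1): `η^{IJ} ρ^i{}_I ρ^j{}_J = 0`. -/
def ca1 {d : ℕ} (r : BSpace d → Fin d → DIdx d → ℝ) : Prop :=
  ∀ (x : BSpace d) (i j : Fin d), ∑ I, ∑ J, eta I J * r x i I * r x j J = 0

/-- Local Courant algebroid condition (ca2):
`ρ^i{}_I ∂_i ρ^j{}_J − ρ^i{}_J ∂_i ρ^j{}_I = η^{KL} ρ^j{}_K T_{LIJ}`. -/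
def ca2 {d : ℕ} (r : BSpace d → Fin d → DIdx d → ℝ)
    (T : BSpace d → DIdx d → DIdx d → DIdx d → ℝ) : Prop :=
  ∀ (x : BSpace d) (j : Fin d) (I J : DIdx d),
    ∑ i, (r x i I * pdb (fun y => r y j J) i x - r x i J * pdb (fun y => r y j I) i x)
      = ∑ K, ∑ L, eta K L * r x j K * T x L I J

/-- Local Courant algebroid condition (ca3):
`4 ρ^i{}_{[L} ∂_i T_{IJK]} + 3 η^{MN} T_{M[IJ} T_{KL]N} = 0`. -/
def ca3 {d : ℕ} (r : BSpace d → Fin d → DIdx d → ℝ)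
    (T : BSpace d → DIdx d → DIdx d → DIdx d → ℝ) : Prop :=
  ∀ (x : BSpace d) (I J K L : DIdx d),
    4 * asym4 (fun a b c e => ∑ i, r x i a * pdb (fun y => T y b c e) i x) L I J K
      + 3 * asym4 (fun a b c e => ∑ M, ∑ N, eta M N * T x M a b * T x c e N) I J K L
      = 0

/-! Since the `δ`-block of the anchor is constant, (ca2) with one lower index `k` and one upper
index reads `∂_k β^{jl} = T^j{}_k{}^l + β^{jm} T_{mk}{}^l`, and a pure R-flux makes the right
side vanish. Once `β` is constant, (ca2) with two upper indices collapses to `0 = R^{ijk}`.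
Condition (ca1) is simply `β^{ij} + β^{ji} = 0`. -/

section IdBetaAnchor

variable {d : ℕ}

def idBetaAnchor (β : BSpace d → Fin d → Fin d → ℝ) : BSpace d → Fin d → DIdx d → ℝ :=
  fun x i => Sum.elim (fun j => if i = j then (1:ℝ) else 0) (fun j => β x i j)

lemma sum_eta_mul_mul (u v : DIdx d → ℝ) :
    ∑ I, ∑ J, eta I J * u I * v J
      = ∑ i, (u (Sum.inl i) * v (Sum.inr i) + u (Sum.inr i) * v (Sum.inl i)) := by
  simp [Fintype.sum_sum_type, eta, Finset.sum_add_distrib, add_comm]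

variable (β : BSpace d → Fin d → Fin d → ℝ)

lemma sum_eta_idBetaAnchor_mul (x : BSpace d) (j : Fin d) (v : DIdx d → ℝ) :
    ∑ K, ∑ L, eta K L * idBetaAnchor β x j K * v L
      = v (Sum.inr j) + ∑ m, β x j m * v (Sum.inl m) := by
  rw [sum_eta_mul_mul]
  simp [idBetaAnchor, Finset.sum_add_distrib]

theorem ca1_idBetaAnchor_iff :
    ca1 (idBetaAnchor β) ↔ ∀ (x : BSpace d) (i j : Fin d), β x i j = -β x j i := by
  refine forall_congr' fun x => forall₂_congr fun i j => ?_
  rw [sum_eta_idBetaAnchor_mul]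
  simp [idBetaAnchor, eq_neg_iff_add_eq_zero, add_comm]

lemma ca2_lhs_idBetaAnchor_inl (x : BSpace d) (j k : Fin d) (J : DIdx d) :
    ∑ i, (idBetaAnchor β x i (Sum.inl k) * pdb (fun y => idBetaAnchor β y j J) i x
        - idBetaAnchor β x i J * pdb (fun y => idBetaAnchor β y j (Sum.inl k)) i x)
      = pdb (fun y => idBetaAnchor β y j J) k x := by
  simp [idBetaAnchor, pdb]

theorem pdb_eq_of_ca2_idBetaAnchor {T : BSpace d → DIdx d → DIdx d → DIdx d → ℝ}
    (h : ca2 (idBetaAnchor β) T) (x : BSpace d) (k j l : Fin d) :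
    pdb (fun y => β y j l) k x
      = T x (Sum.inr j) (Sum.inl k) (Sum.inr l)
        + ∑ m, β x j m * T x (Sum.inl m) (Sum.inl k) (Sum.inr l) := by
  have := h x j (Sum.inl k) (Sum.inr l)
  rwa [ca2_lhs_idBetaAnchor_inl, sum_eta_idBetaAnchor_mul] at this

theorem twist_eq_of_ca2_idBetaAnchor {T : BSpace d → DIdx d → DIdx d → DIdx d → ℝ}
    (h : ca2 (idBetaAnchor β) T) (hβ : ∀ x k i j, pdb (fun y => β y i j) k x = 0)
    (x : BSpace d) (j a b : Fin d) :
    T x (Sum.inr j) (Sum.inr a) (Sum.inr b)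
      + ∑ m, β x j m * T x (Sum.inl m) (Sum.inr a) (Sum.inr b) = 0 := by
  have := h x j (Sum.inr a) (Sum.inr b)
  rw [sum_eta_idBetaAnchor_mul] at this
  simpa [idBetaAnchor, hβ] using this.symm

end IdBetaAnchor

theorem statement15 {d : ℕ} (β : BSpace d → Fin d → Fin d → ℝ)
    (Rf : BSpace d → Fin d → Fin d → Fin d → ℝ)
    (h1 : ca1 (fun x i => Sum.elim (fun j => if i = j then (1:ℝ) else 0)
        (fun j => β x i j)))
    (h2 : ca2 (fun x i => Sum.elim (fun j => if i = j then (1:ℝ) else 0)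
        (fun j => β x i j))
      (fun x I J K => match I, J, K with
        | Sum.inr a, Sum.inr b, Sum.inr c => Rf x a b c
        | _, _, _ => 0)) :
    (∀ (x : BSpace d) (i j : Fin d), β x i j = -β x j i)
    ∧ (∀ (x : BSpace d) (k i j : Fin d), pdb (fun y => β y i j) k x = 0)
    ∧ (∀ (x : BSpace d) (i j k : Fin d), Rf x i j k = 0) := by
  have hconst : ∀ x k i j, pdb (fun y => β y i j) k x = 0 := fun x k i j => by
    simpa using pdb_eq_of_ca2_idBetaAnchor β h2 x k i j
  refine ⟨(ca1_idBetaAnchor_iff β).mp h1, hconst, fun x i j k => ?_⟩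
  simpa using twist_eq_of_ca2_idBetaAnchor β h2 hconst x i j k
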